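/- arXiv:1710.01208 — 6 statements merged into one kernel-verified Lean document; each statement's English description precedes it below -/
import Mathlib

section
/- Let L ≥ 1 and p_1,…,p_L be fixed, and let G = G(p_L). Then for every degree distribution F ∈ F(p_L) one has ξ_F ≥ ξ_G; equivalently, g_F(z̃_F) ≤ g_G(z̃_G). -/
open scoped BigOperators

/-- A degree distribution: a sequence of nonnegative probabilities on the positive
integers summing to one, with finite mean and `p 2 ≠ 1`. -/
structure DegreeDist where
  p : ℕ → ℝ
  nonneg : ∀ d, 0 ≤ p d
  zero : p 0 = 0
  psummable : Summable p
  sum_one : ∑' d : ℕ, p d = 1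
  mean_summable : Summable fun d : ℕ => (d : ℝ) * p d
  two_ne_one : p 2 ≠ 1

/-- The mean `μ_F` of a degree distribution. -/
noncomputable def mu (F : DegreeDist) : ℝ := ∑' d : ℕ, (d : ℝ) * F.p d

/-- The probability generating function `g_F`. -/
noncomputable def pgf (F : DegreeDist) (s : ℝ) : ℝ := ∑' d : ℕ, F.p d * s ^ d

/-- The derivative `g_F'` of the probability generating function. -/
noncomputable def pgfD (F : DegreeDist) (s : ℝ) : ℝ := ∑' d : ℕ, (d : ℝ) * F.p d * s ^ (d - 1)

/-- `z` is the smallest `s ∈ [0,1]` with `m * s = g_F'(s)`.  Taking `m = mu F` gives `z̃_F`;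
taking `m = μ` gives `z̃_F^{(μ)}`. -/
def IsSmallestRoot (F : DegreeDist) (m z : ℝ) : Prop :=
  z ∈ Set.Icc (0 : ℝ) 1 ∧ m * z = pgfD F z ∧
    ∀ s ∈ Set.Icc (0 : ℝ) 1, m * s = pgfD F s → z ≤ s

/-- Membership in the class `F(p_L)`: the first `L` probabilities agree with `p`. -/
def MemF (L : ℕ) (p : ℕ → ℝ) (F : DegreeDist) : Prop :=
  ∀ d, 1 ≤ d → d ≤ L → F.p d = p d

/-- The remaining mass `p_{>L} = 1 - ∑_{i=1}^L p_i`. -/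
noncomputable def pGt (L : ℕ) (p : ℕ → ℝ) : ℝ := 1 - ∑ i ∈ Finset.Icc 1 L, p i

/-- The distribution `G = G(p_L)`: all remaining mass at `L+1`. -/
def IsG (L : ℕ) (p : ℕ → ℝ) (G : DegreeDist) : Prop :=
  (∀ d, 1 ≤ d → d ≤ L → G.p d = p d) ∧
  G.p (L + 1) = pGt L p ∧
  ∀ d, L + 1 < d → G.p d = 0

/-- `κ = (μ - ∑_{d=1}^L d p_d) / p_{>L}`. -/
noncomputable def kappa (L : ℕ) (p : ℕ → ℝ) (μ : ℝ) : ℝ :=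
  (μ - ∑ d ∈ Finset.Icc 1 L, (d : ℝ) * p d) / pGt L p

/-- `r_m = (κ - (L+1)) / (m - (L+1))`. -/
noncomputable def rmass (L : ℕ) (κ : ℝ) (m : ℕ) : ℝ :=
  (κ - ((L : ℝ) + 1)) / ((m : ℝ) - ((L : ℝ) + 1))

/-- The distribution `G_m`: mass `(1-r_m) p_{>L}` at `L+1` and `r_m p_{>L}` at `m`. -/
def IsGm (L : ℕ) (p : ℕ → ℝ) (μ : ℝ) (m : ℕ) (Gm : DegreeDist) : Prop :=
  (∀ d, 1 ≤ d → d ≤ L → Gm.p d = p d) ∧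
  Gm.p (L + 1) = (1 - rmass L (kappa L p μ) m) * pGt L p ∧
  Gm.p m = rmass L (kappa L p μ) m * pGt L p ∧
  ∀ d, L + 1 < d → d ≠ m → Gm.p d = 0

/-- The distribution `H = H(μ, p_L)`: remaining mass at `⌊κ⌋` and `⌊κ⌋+1`, preserving mean `μ`. -/
def IsH (L : ℕ) (p : ℕ → ℝ) (μ : ℝ) (H : DegreeDist) : Prop :=
  (∀ d, 1 ≤ d → d ≤ L → H.p d = p d) ∧
  H.p ⌊kappa L p μ⌋₊ = ((⌊kappa L p μ⌋₊ : ℝ) + 1 - kappa L p μ) * pGt L p ∧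
  H.p (⌊kappa L p μ⌋₊ + 1) = (kappa L p μ - (⌊kappa L p μ⌋₊ : ℝ)) * pGt L p ∧
  ∀ d, L < d → d ≠ ⌊kappa L p μ⌋₊ → d ≠ ⌊kappa L p μ⌋₊ + 1 → H.p d = 0

/-!
Let `z = z̃_G`. Since `F` and `G` agree up to degree `L` and carry the same mass beyond `L`, which
`G` puts entirely on `L + 1`, any sum `∑ F_d φ(d)` is at most `∑ G_d φ(d)` as soon as `φ(d) ≤ φ(L + 1)`
for `d > L + 1`. Both `φ(d) = z^d` and `φ(d) = d z^{d-1} - d z` qualify, giving `g_F(z) ≤ g_G(z)` and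
`g_F'(z) - μ_F z ≤ g_G'(z) - μ_G z = 0`. As `g_F'(0) = F_1 ≥ 0`, the intermediate value theorem puts
a root of `μ_F s = g_F'(s)` in `[0, z]`, so `z̃_F ≤ z` and `g_F(z̃_F) ≤ g_F(z) ≤ g_G(z)`.
-/

open Set

namespace DegreeDist

variable (F : DegreeDist)

theorem hasSum_one : HasSum F.p 1 := F.sum_one ▸ F.psummable.hasSum

theorem hasSum_pgf {s : ℝ} (hs : s ∈ Icc (0 : ℝ) 1) :
    HasSum (fun d => F.p d * s ^ d) (pgf F s) :=
  (Summable.of_nonneg_of_le (fun d => mul_nonneg (F.nonneg d) (pow_nonneg hs.1 d))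
    (fun d => mul_le_of_le_one_right (F.nonneg d) (pow_le_one₀ hs.1 hs.2)) F.psummable).hasSum

theorem summable_pgfD {s : ℝ} (hs : s ∈ Icc (0 : ℝ) 1) :
    Summable fun d : ℕ => (d : ℝ) * F.p d * s ^ (d - 1) :=
  Summable.of_nonneg_of_le
    (fun d => mul_nonneg (mul_nonneg d.cast_nonneg (F.nonneg d)) (pow_nonneg hs.1 _))
    (fun d => mul_le_of_le_one_right (mul_nonneg d.cast_nonneg (F.nonneg d))
      (pow_le_one₀ hs.1 hs.2)) F.mean_summable

theorem hasSum_pgfD_sub_mu_mul {s : ℝ} (hs : s ∈ Icc (0 : ℝ) 1) :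
    HasSum (fun d : ℕ => F.p d * (d * s ^ (d - 1) - d * s)) (pgfD F s - mu F * s) :=
  ((F.summable_pgfD hs).hasSum.sub (F.mean_summable.hasSum.mul_right s)).congr_fun
    fun d => by ring

theorem pgf_mono {s t : ℝ} (hs : 0 ≤ s) (hst : s ≤ t) (ht : t ≤ 1) : pgf F s ≤ pgf F t :=
  hasSum_le (fun d => mul_le_mul_of_nonneg_left (pow_le_pow_left₀ hs hst d) (F.nonneg d))
    (F.hasSum_pgf ⟨hs, hst.trans ht⟩) (F.hasSum_pgf ⟨hs.trans hst, ht⟩)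

theorem continuousOn_pgfD : ContinuousOn (pgfD F) (Icc 0 1) := by
  rw [continuousOn_iff_continuous_domRestrict]
  refine continuous_tsum (fun d => continuous_const.mul (continuous_subtype_val.pow (d - 1)))
    F.mean_summable fun d x => ?_
  rw [Real.norm_eq_abs, abs_of_nonneg (mul_nonneg
    (mul_nonneg d.cast_nonneg (F.nonneg d)) (pow_nonneg x.2.1 _))]
  exact mul_le_of_le_one_right (mul_nonneg d.cast_nonneg (F.nonneg d)) (pow_le_one₀ x.2.1 x.2.2)

theorem pgfD_zero : pgfD F 0 = F.p 1 := by
  rw [pgfD, tsum_eq_single 1]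
  · simp
  · rintro (_ | _ | d) hd
    · simp
    · exact absurd rfl hd
    · simp

end DegreeDist

theorem IsSmallestRoot.le_of_pgfD_le {F : DegreeDist} {m zF s : ℝ} (hzF : IsSmallestRoot F m zF)
    (hs : s ∈ Icc (0 : ℝ) 1) (h : pgfD F s ≤ m * s) : zF ≤ s := by
  have hcont : ContinuousOn (fun x => m * x - pgfD F x) (Icc 0 s) :=
    (continuousOn_const.mul continuousOn_id).sub
      (F.continuousOn_pgfD.mono (Icc_subset_Icc le_rfl hs.2))
  have hzero : m * 0 - pgfD F 0 ≤ 0 := by simpa [F.pgfD_zero] using F.nonneg 1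
  obtain ⟨x, hx, hroot⟩ := intermediate_value_Icc hs.1 hcont ⟨hzero, sub_nonneg.2 h⟩
  exact (hzF.2.2 x ⟨hx.1, hx.2.trans hs.2⟩ (sub_eq_zero.1 hroot)).trans hx.2

theorem nat_mul_pow_pred_sub_le {n : ℕ} {s : ℝ} (hs : s ∈ Icc (0 : ℝ) 1) {d : ℕ} (hd : n + 1 < d) :
    (d : ℝ) * s ^ (d - 1) - d * s ≤ (n + 1) * s ^ n - (n + 1) * s := by
  obtain ⟨j, rfl⟩ : ∃ j, d = n + 2 + j := ⟨d - (n + 2), by omega⟩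
  have hn : s ^ (n + 2 + j - 1) ≤ s ^ n := pow_le_pow_of_le_one hs.1 hs.2 (by omega)
  have h1 : s ^ (n + 2 + j - 1) ≤ s := by
    simpa using pow_le_pow_of_le_one hs.1 hs.2 (show 1 ≤ n + 2 + j - 1 by omega)
  push_cast
  -- of the `n + 2 + j` copies of `s ^ (d - 1)`, bound `n + 1` by `s ^ n` and the rest by `s`
  nlinarith [mul_le_mul_of_nonneg_left hn (by positivity : (0 : ℝ) ≤ n + 1),
    mul_le_mul_of_nonneg_left h1 (by positivity : (0 : ℝ) ≤ j + 1)]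

/-- As both have total mass one, `G` puts all the mass of `F` beyond `n` on degree `n + 1`. -/
def IsTailCollapse (n : ℕ) (F G : DegreeDist) : Prop :=
  (∀ d ≤ n, F.p d = G.p d) ∧ ∀ d, n + 1 < d → G.p d = 0

theorem MemF.isTailCollapse {L : ℕ} {p : ℕ → ℝ} {F G : DegreeDist} (hF : MemF L p F)
    (hG : IsG L p G) : IsTailCollapse L F G := by
  refine ⟨fun d hd => ?_, hG.2.2⟩
  rcases Nat.eq_zero_or_pos d with rfl | hd0
  · rw [F.zero, G.zero]
  · rw [hF d hd0 hd, hG.1 d hd0 hd]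

namespace IsTailCollapse

variable {n : ℕ} {F G : DegreeDist}

theorem hasSum_le (h : IsTailCollapse n F G) {φ : ℕ → ℝ} (hφ : ∀ d, n + 1 < d → φ d ≤ φ (n + 1))
    {a b : ℝ} (ha : HasSum (fun d => F.p d * φ d) a) (hb : HasSum (fun d => G.p d * φ d) b) :
    a ≤ b := by
  have hmass := (F.hasSum_one.sub G.hasSum_one).mul_right (φ (n + 1))
  rw [sub_self, zero_mul] at hmass
  have hterm : ∀ d, F.p d * φ d ≤ G.p d * φ d + (F.p d - G.p d) * φ (n + 1) := by
    intro d
    rcases lt_trichotomy d (n + 1) with hd | rfl | hd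
    · rw [h.1 d (Nat.lt_succ_iff.1 hd)]
      simp
    · linarith
    · rw [h.2 d hd]
      simpa using mul_le_mul_of_nonneg_left (hφ d hd) (F.nonneg d)
  simpa using _root_.hasSum_le hterm ha (hb.add hmass)

theorem pgf_le (h : IsTailCollapse n F G) {s : ℝ} (hs : s ∈ Icc (0 : ℝ) 1) :
    pgf F s ≤ pgf G s :=
  h.hasSum_le (fun _ hd => pow_le_pow_of_le_one hs.1 hs.2 hd.le) (F.hasSum_pgf hs)
    (G.hasSum_pgf hs)

theorem pgfD_sub_mu_mul_le (h : IsTailCollapse n F G) {s : ℝ} (hs : s ∈ Icc (0 : ℝ) 1) :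
    pgfD F s - mu F * s ≤ pgfD G s - mu G * s :=
  h.hasSum_le (fun _ hd => by simpa using nat_mul_pow_pred_sub_le hs hd)
    (F.hasSum_pgfD_sub_mu_mul hs) (G.hasSum_pgfD_sub_mu_mul hs)

end IsTailCollapse

theorem tail_does_not_determine_giant_stmt0_general
    (L : ℕ) (p : ℕ → ℝ)
    (G : DegreeDist) (hG : IsG L p G)
    (F : DegreeDist) (hF : MemF L p F)
    (zF zG : ℝ)
    (hzF : IsSmallestRoot F (mu F) zF)
    (hzG : IsSmallestRoot G (mu G) zG) :
    1 - pgf G zG ≤ 1 - pgf F zF := by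
  obtain ⟨hzG01, hzGroot, -⟩ := hzG
  have hcollapse : IsTailCollapse L F G := hF.isTailCollapse hG
  have hFbelow : pgfD F zG ≤ mu F * zG := by
    linarith [hcollapse.pgfD_sub_mu_mul_le hzG01]
  have hzF_le : zF ≤ zG := hzF.le_of_pgfD_le hzG01 hFbelow
  linarith [F.pgf_mono hzF.1.1 hzF_le hzG01.2, hcollapse.pgf_le hzG01]

/-- For every `F ∈ F(p_L)`, `ξ_F ≥ ξ_G`, i.e. `g_F(z̃_F) ≤ g_G(z̃_G)`. -/
theorem tail_does_not_determine_giant_stmt0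
    (L : ℕ) (hL : 1 ≤ L) (p : ℕ → ℝ)
    (hp : ∀ i, 0 ≤ p i) (hplt : ∑ i ∈ Finset.Icc 1 L, p i < 1)
    (G : DegreeDist) (hG : IsG L p G)
    (F : DegreeDist) (hF : MemF L p F)
    (zF zG : ℝ)
    (hzF : IsSmallestRoot F (mu F) zF)
    (hzG : IsSmallestRoot G (mu G) zG) :
    1 - pgf G zG ≤ 1 - pgf F zF :=
  tail_does_not_determine_giant_stmt0_general L p G hG F hF zF zG hzF hzG
end

section
/- Let L ≥ 1 and p_1,…,p_L be fixed, let G = G(p_L), and let F ∈ F(p_L). Then μ_G ≤ μ_F; for every d with 0 ≤ d ≤ L one has (d+1)·F_{d+1}/μ_F ≤ (d+1)·G_{d+1}/μ_G, and (d+1)·G_{d+1}/μ_G = 0 for d > L; consequently, the down-shifted size-biased distribution of G is stochastically dominated by that of F, i.e., for every integer k ≥ 0, Σ_{d=0}^k (d+1)·G_{d+1}/μ_G ≥ Σ_{d=0}^k (d+1)·F_{d+1}/μ_F. -/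
open scoped BigOperators

/-!
Below degree `L + 1` every `F ∈ F(p_L)` agrees with `G`, and `G` places all of the remaining
mass `p_{>L}` at `L + 1`, the smallest degree available to it; hence `μ_G ≤ μ_F` and
`F_{L+1} ≤ G_{L+1}`. Dividing by the larger mean only shrinks `F`'s size-biased weights, so
`p̃^F_d ≤ p̃^G_d` for `d ≤ L`. Since `p̃^G` is supported on `{0, …, L}`, its partial sums are
`1` from `k = L` on, while those of `p̃^F` never exceed `1`.
-/

open Finset

noncomputable def sizeBiased (F : DegreeDist) (d : ℕ) : ℝ :=
  ((d : ℝ) + 1) * F.p (d + 1) / mu F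

/-- The mean of the distribution obtained from `F` by moving all its mass at degrees `≥ n`
to `n`. -/
noncomputable def collapsedMean (F : DegreeDist) (n : ℕ) : ℝ :=
  ∑ d ∈ range n, (d : ℝ) * F.p d + n * (1 - ∑ d ∈ range n, F.p d)

namespace DegreeDist

variable (F : DegreeDist)

theorem one_le_mu : 1 ≤ mu F := by
  rw [← F.sum_one, mu]
  refine F.psummable.tsum_le_tsum (fun d => ?_) F.mean_summable
  rcases Nat.eq_zero_or_pos d with rfl | hd
  · simp [F.zero]
  · exact le_mul_of_one_le_left (F.nonneg d) (by exact_mod_cast hd)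

theorem mu_pos : 0 < mu F := one_pos.trans_le F.one_le_mu

theorem tsum_p_add (n : ℕ) : ∑' i, F.p (i + n) = 1 - ∑ d ∈ range n, F.p d := by
  rw [← F.sum_one, ← F.psummable.sum_add_tsum_nat_add n, add_sub_cancel_left]

theorem sum_range_p_le_one (n : ℕ) : ∑ d ∈ range n, F.p d ≤ 1 :=
  F.sum_one ▸ F.psummable.sum_le_tsum _ fun d _ => F.nonneg d

theorem p_le_one_sub_sum_range (n : ℕ) : F.p n ≤ 1 - ∑ d ∈ range n, F.p d := by
  have := F.sum_range_p_le_one (n + 1)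
  rw [sum_range_succ] at this
  linarith

theorem mu_eq_sum_range_add_tsum (n : ℕ) :
    mu F = ∑ d ∈ range n, (d : ℝ) * F.p d + ∑' i, ((i + n : ℕ) : ℝ) * F.p (i + n) :=
  (F.mean_summable.sum_add_tsum_nat_add n).symm

theorem collapsedMean_le_mu (n : ℕ) : collapsedMean F n ≤ mu F := by
  rw [collapsedMean, mu_eq_sum_range_add_tsum F n, ← tsum_p_add, ← tsum_mul_left]
  refine add_le_add_right (((summable_nat_add_iff n).2 F.psummable |>.mul_left _).tsum_le_tsum
    (fun i => ?_) ((summable_nat_add_iff n).2 F.mean_summable)) _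
  exact mul_le_mul_of_nonneg_right (by exact_mod_cast Nat.le_add_left n i) (F.nonneg _)

theorem mu_eq_collapsedMean_of_support {n : ℕ} (h : ∀ d, n < d → F.p d = 0) :
    mu F = collapsedMean F n := by
  rw [collapsedMean, mu_eq_sum_range_add_tsum F n, ← tsum_p_add, ← tsum_mul_left]
  congr 1
  refine tsum_congr fun i => ?_
  rcases Nat.eq_zero_or_pos i with rfl | hi
  · simp
  · rw [h (i + n) (by omega), mul_zero, mul_zero]

theorem sizeBiased_nonneg (d : ℕ) : 0 ≤ sizeBiased F d :=
  div_nonneg (mul_nonneg (by positivity) (F.nonneg _)) F.mu_pos.le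

theorem hasSum_succ_mul_succ : HasSum (fun d : ℕ => ((d : ℝ) + 1) * F.p (d + 1)) (mu F) := by
  simpa [mu, F.zero] using (hasSum_nat_add_iff' 1).2 F.mean_summable.hasSum

theorem hasSum_sizeBiased : HasSum (sizeBiased F) 1 := by
  have h := F.hasSum_succ_mul_succ.div_const (mu F)
  rwa [div_self F.mu_pos.ne'] at h

theorem sum_range_sizeBiased_le_one (k : ℕ) : ∑ d ∈ range k, sizeBiased F d ≤ 1 :=
  F.hasSum_sizeBiased.tsum_eq ▸ F.hasSum_sizeBiased.summable.sum_le_tsum _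
    fun d _ => F.sizeBiased_nonneg d

theorem sum_range_sizeBiased_eq_one_of_support {n : ℕ} (h : ∀ d, n < d → F.p d = 0) :
    ∑ d ∈ range n, sizeBiased F d = 1 := by
  refine (F.hasSum_sizeBiased.unique (hasSum_sum_of_ne_finset_zero fun d hd => ?_)).symm
  rw [sizeBiased, h (d + 1) (by simpa using hd), mul_zero, zero_div]

theorem sizeBiased_le_sizeBiased {G : DegreeDist} {d : ℕ} (h : F.p (d + 1) ≤ G.p (d + 1))
    (hmu : mu G ≤ mu F) : sizeBiased F d ≤ sizeBiased G d :=
  div_le_div₀ (mul_nonneg (by positivity) (G.nonneg _))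
    (mul_le_mul_of_nonneg_left h (by positivity)) G.mu_pos hmu

end DegreeDist

section

variable {L : ℕ} {p : ℕ → ℝ} {F G : DegreeDist}

theorem MemF.sum_range_p (hF : MemF L p F) :
    ∑ d ∈ range (L + 1), F.p d = ∑ i ∈ Icc 1 L, p i := by
  rw [range_eq_Ico, sum_eq_sum_Ico_succ_bot (Nat.succ_pos L), F.zero, zero_add]
  exact sum_congr rfl fun d hd => by
    rw [mem_Icc] at hd
    exact hF d hd.1 hd.2

theorem MemF.p_eq (hF : MemF L p F) (hG : MemF L p G) {d : ℕ} (hd : d ≤ L) :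
    F.p d = G.p d := by
  rcases Nat.eq_zero_or_pos d with rfl | hd0
  · rw [F.zero, G.zero]
  · rw [hF d hd0 hd, hG d hd0 hd]

theorem MemF.collapsedMean_eq (hF : MemF L p F) (hG : MemF L p G) :
    collapsedMean F (L + 1) = collapsedMean G (L + 1) := by
  have h : ∀ d ∈ range (L + 1), F.p d = G.p d := fun d hd =>
    hF.p_eq hG (Nat.lt_succ_iff.1 (mem_range.1 hd))
  rw [collapsedMean, collapsedMean, sum_congr rfl h]
  congr 1
  exact sum_congr rfl fun d hd => by rw [h d hd]

theorem IsG.memF (hG : IsG L p G) : MemF L p G := hG.1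

theorem IsG.mu_le (hG : IsG L p G) (hF : MemF L p F) : mu G ≤ mu F := by
  rw [G.mu_eq_collapsedMean_of_support hG.2.2, hG.memF.collapsedMean_eq hF]
  exact F.collapsedMean_le_mu _

theorem IsG.p_succ_le (hG : IsG L p G) (hF : MemF L p F) {d : ℕ} (hd : d ≤ L) :
    F.p (d + 1) ≤ G.p (d + 1) := by
  rcases hd.lt_or_eq with hd | rfl
  · exact (hF.p_eq hG.memF hd).le
  · calc F.p (d + 1) ≤ 1 - ∑ i ∈ range (d + 1), F.p i := F.p_le_one_sub_sum_range _
      _ = G.p (d + 1) := by rw [hG.2.1, hF.sum_range_p, pGt]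

theorem IsG.sizeBiased_le (hG : IsG L p G) (hF : MemF L p F) {d : ℕ} (hd : d ≤ L) :
    sizeBiased F d ≤ sizeBiased G d :=
  F.sizeBiased_le_sizeBiased (hG.p_succ_le hF hd) (hG.mu_le hF)

theorem IsG.sizeBiased_eq_zero (hG : IsG L p G) {d : ℕ} (hd : L < d) :
    sizeBiased G d = 0 := by
  rw [sizeBiased, hG.2.2 (d + 1) (by omega), mul_zero, zero_div]

theorem IsG.sum_range_sizeBiased_le (hG : IsG L p G) (hF : MemF L p F) (k : ℕ) :
    ∑ d ∈ range (k + 1), sizeBiased F d ≤ ∑ d ∈ range (k + 1), sizeBiased G d := by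
  rcases le_or_gt k L with hk | hk
  · exact sum_le_sum fun d hd => hG.sizeBiased_le hF (by rw [mem_range] at hd; omega)
  · rw [G.sum_range_sizeBiased_eq_one_of_support fun d hd => hG.2.2 d (by omega)]
    exact F.sum_range_sizeBiased_le_one _

end

theorem tail_does_not_determine_giant_stmt2_general
    (L : ℕ) (p : ℕ → ℝ)
    (G : DegreeDist) (hG : IsG L p G)
    (F : DegreeDist) (hF : MemF L p F) :
    mu G ≤ mu F ∧
    (∀ d : ℕ, d ≤ L →
      ((d : ℝ) + 1) * F.p (d + 1) / mu F ≤ ((d : ℝ) + 1) * G.p (d + 1) / mu G) ∧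
    (∀ d : ℕ, L < d → ((d : ℝ) + 1) * G.p (d + 1) / mu G = 0) ∧
    ∀ k : ℕ,
      ∑ d ∈ Finset.range (k + 1), ((d : ℝ) + 1) * F.p (d + 1) / mu F ≤
        ∑ d ∈ Finset.range (k + 1), ((d : ℝ) + 1) * G.p (d + 1) / mu G :=
  ⟨hG.mu_le hF, fun _ => hG.sizeBiased_le hF, fun _ => hG.sizeBiased_eq_zero,
    hG.sum_range_sizeBiased_le hF⟩

/-- `μ_G ≤ μ_F`; pointwise comparison of down-shifted size-biased
probabilities up to `L`, vanishing beyond `L` for `G`; and stochastic domination. -/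
theorem tail_does_not_determine_giant_stmt2
    (L : ℕ) (hL : 1 ≤ L) (p : ℕ → ℝ)
    (hp : ∀ i, 0 ≤ p i) (hplt : ∑ i ∈ Finset.Icc 1 L, p i < 1)
    (G : DegreeDist) (hG : IsG L p G)
    (F : DegreeDist) (hF : MemF L p F) :
    mu G ≤ mu F ∧
    (∀ d : ℕ, d ≤ L →
      ((d : ℝ) + 1) * F.p (d + 1) / mu F ≤ ((d : ℝ) + 1) * G.p (d + 1) / mu G) ∧
    (∀ d : ℕ, L < d → ((d : ℝ) + 1) * G.p (d + 1) / mu G = 0) ∧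
    ∀ k : ℕ,
      ∑ d ∈ Finset.range (k + 1), ((d : ℝ) + 1) * F.p (d + 1) / mu F ≤
        ∑ d ∈ Finset.range (k + 1), ((d : ℝ) + 1) * G.p (d + 1) / mu G :=
  tail_does_not_determine_giant_stmt2_general L p G hG F hF
end

section
/- Fix L ≥ 1, probabilities p_1,…,p_L and a mean μ > 0 with κ > L+1, and let G = G(p_L). If z̃_G ≤ e^{−2/(L+1)}, then g_{G_m}(z̃_m) converges to g_G(z̃_G^{(μ)}) as m → ∞; consequently, the infimum over F ∈ F(μ,p_L) of the giant-component size ξ_F equals 1 − g_G(z̃_G^{(μ)}). -/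
open scoped BigOperators

/-!
For `s ≤ e^{-2/(L+1)}` every tail weight `d s^{d-1}` (`d > L`) of `g_F'` is at most `(L+1) s^L`,
so among all `F` with head `p_L` the distribution `G` maximises `g_F'` at such `s`; it also
maximises `g_F` on `[0,1]`. As `μ_G < μ`, we get `z̃_G^{(μ)} ≤ z̃_G ≤ e^{-2/(L+1)}`, hence
`z̃_F ≤ z̃_G^{(μ)}` and `g_F(z̃_F) ≤ g_G(z̃_G^{(μ)})` for every `F ∈ F(μ,p_L)`. The distribution `G_m`
moves the mass `r_m p_{>L} → 0` from `L+1` to `m`, which lowers `g'` on `[0,1]` by at most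
`r_m p_{>L} (L+1)`; so `z̃_m → z̃_G^{(μ)}` and the bound is attained in the limit.
-/

open Filter Topology Set

section Generating

variable (F : DegreeDist)

lemma abs_mul_pow_le {a s : ℝ} (ha : 0 ≤ a) (hs : s ∈ Icc (0 : ℝ) 1) (n : ℕ) :
    |a * s ^ n| ≤ a := by
  rw [abs_mul, abs_of_nonneg ha, abs_pow, abs_of_nonneg hs.1]
  exact mul_le_of_le_one_right ha (pow_le_one₀ hs.1 hs.2)

lemma summable_pgf {s : ℝ} (hs : s ∈ Icc (0 : ℝ) 1) : Summable fun d => F.p d * s ^ d :=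
  F.psummable.of_norm_bounded fun d => abs_mul_pow_le (F.nonneg d) hs d

lemma summable_pgfD {s : ℝ} (hs : s ∈ Icc (0 : ℝ) 1) :
    Summable fun d : ℕ => (d : ℝ) * F.p d * s ^ (d - 1) :=
  F.mean_summable.of_norm_bounded fun d =>
    abs_mul_pow_le (mul_nonneg d.cast_nonneg (F.nonneg d)) hs (d - 1)

lemma pgfD_eq_tsum (s : ℝ) : pgfD F s = ∑' d : ℕ, F.p d * ((d : ℝ) * s ^ (d - 1)) := by
  simp only [pgfD, mul_left_comm, mul_assoc]

lemma mu_eq_tsum : mu F = ∑' d : ℕ, F.p d * d := by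
  simp only [mu, mul_comm]

lemma pgf_mono {a b : ℝ} (ha : 0 ≤ a) (hab : a ≤ b) (hb : b ≤ 1) : pgf F a ≤ pgf F b :=
  (summable_pgf F ⟨ha, hab.trans hb⟩).tsum_le_tsum
    (fun d => mul_le_mul_of_nonneg_left (pow_le_pow_left₀ ha hab d) (F.nonneg d))
    (summable_pgf F ⟨ha.trans hab, hb⟩)

lemma pgfD_nonneg {s : ℝ} (hs : 0 ≤ s) : 0 ≤ pgfD F s :=
  tsum_nonneg fun d => by have := F.nonneg d; positivity

lemma continuousOn_pgfD : ContinuousOn (pgfD F) (Icc 0 1) :=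
  continuousOn_tsum (fun d => by fun_prop) F.mean_summable fun d _ hs =>
    abs_mul_pow_le (mul_nonneg d.cast_nonneg (F.nonneg d)) hs (d - 1)

lemma exists_root_mem_Icc (m : ℝ) {b : ℝ} (hb : b ∈ Icc (0 : ℝ) 1)
    (hfb : pgfD F b ≤ m * b) : ∃ s ∈ Icc 0 b, m * s = pgfD F s := by
  have hcont : ContinuousOn (fun s => pgfD F s - m * s) (Icc 0 b) :=
    ((continuousOn_pgfD F).mono (Icc_subset_Icc_right hb.2)).sub (by fun_prop)
  have h0 : 0 ≤ pgfD F 0 - m * 0 := by simpa using pgfD_nonneg F le_rfl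
  obtain ⟨s, hs, hroot⟩ :=
    intermediate_value_Icc' hb.1 hcont ⟨sub_nonpos.2 hfb, h0⟩
  exact ⟨s, hs, (sub_eq_zero.1 hroot).symm⟩

end Generating

section SmallestRoot

variable {F : DegreeDist} {m z : ℝ}

lemma IsSmallestRoot.le_of_pgfD_le_s6 (h : IsSmallestRoot F m z) {b : ℝ} (hb : b ∈ Icc (0 : ℝ) 1)
    (hfb : pgfD F b ≤ m * b) : z ≤ b := by
  obtain ⟨s, hs, hroot⟩ := exists_root_mem_Icc F m hb hfb
  exact (h.2.2 s ⟨hs.1, hs.2.trans hb.2⟩ hroot).trans hs.2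

lemma IsSmallestRoot.sub_pos_of_lt (h : IsSmallestRoot F m z) {s : ℝ} (hs : 0 ≤ s)
    (hsz : s < z) : 0 < pgfD F s - m * s := by
  by_contra! hle
  exact (h.le_of_pgfD_le_s6 ⟨hs, hsz.le.trans h.1.2⟩ (sub_nonpos.1 hle)).not_gt hsz

end SmallestRoot

lemma natCast_mul_pow_pred_le (L : ℕ) {d : ℕ} (hd : L + 1 ≤ d) {s : ℝ} (hs0 : 0 ≤ s)
    (hs : s ≤ Real.exp (-(2 / ((L : ℝ) + 1)))) :
    (d : ℝ) * s ^ (d - 1) ≤ ((L : ℝ) + 1) * s ^ L := by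
  obtain ⟨k, rfl⟩ : ∃ k, d = L + 1 + k := ⟨d - (L + 1), by omega⟩
  have hL : (0 : ℝ) < L + 1 := by positivity
  set x : ℝ := 2 / ((L : ℝ) + 1) * k with hx
  have hsk : s ^ k ≤ Real.exp (-x) :=
    calc s ^ k ≤ Real.exp (-(2 / ((L : ℝ) + 1))) ^ k := pow_le_pow_left₀ hs0 hs k
      _ = Real.exp (-x) := by rw [← Real.exp_nat_mul, hx]; ring_nf
  have hlin : (L : ℝ) + 1 + k ≤ ((L : ℝ) + 1) * Real.exp x := by
    have hLx : ((L : ℝ) + 1) * x = 2 * k := by rw [hx]; field_simp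
    nlinarith [mul_le_mul_of_nonneg_left (Real.add_one_le_exp x) hL.le, k.cast_nonneg (α := ℝ)]
  have key : ((L : ℝ) + 1 + k) * s ^ k ≤ (L : ℝ) + 1 :=
    calc ((L : ℝ) + 1 + k) * s ^ k ≤ ((L : ℝ) + 1) * Real.exp x * Real.exp (-x) :=
          mul_le_mul hlin hsk (pow_nonneg hs0 k) (by positivity)
      _ = (L : ℝ) + 1 := by rw [mul_assoc, ← Real.exp_add, add_neg_cancel, Real.exp_zero, mul_one]
  rw [show L + 1 + k - 1 = k + L by omega, pow_add, ← mul_assoc]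
  push_cast
  exact mul_le_mul_of_nonneg_right key (pow_nonneg hs0 L)

section FixedHead

variable {L : ℕ} {p : ℕ → ℝ} {F G : DegreeDist}

lemma sum_head_eq_of_memF (hF : MemF L p F) (f : ℕ → ℝ) :
    ∑ d ∈ Finset.Icc 1 L, F.p d * f d = ∑ d ∈ Finset.Icc 1 L, p d * f d :=
  Finset.sum_congr rfl fun d hd => by
    rw [hF d (Finset.mem_Icc.1 hd).1 (Finset.mem_Icc.1 hd).2]

lemma tsum_mul_eq_of_memF (hF : MemF L p F) {f : ℕ → ℝ} (hf : Summable fun d => F.p d * f d) :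
    ∑' d, F.p d * f d =
      ∑ d ∈ Finset.Icc 1 L, p d * f d + ∑' d, F.p (d + (L + 1)) * f (d + (L + 1)) := by
  rw [← hf.sum_add_tsum_nat_add (L + 1), Finset.range_eq_Ico,
    Finset.sum_eq_sum_Ico_succ_bot (Nat.succ_pos L), F.zero, zero_mul, zero_add]
  exact congrArg (· + _) (sum_head_eq_of_memF hF f)

lemma tsum_tail_eq_pGt (hF : MemF L p F) : ∑' d, F.p (d + (L + 1)) = pGt L p := by
  have h := tsum_mul_eq_of_memF hF (f := fun _ => 1) (by simpa using F.psummable)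
  simp only [mul_one, F.sum_one] at h
  rw [pGt, h, add_sub_cancel_left]

lemma tsum_mul_le_of_memF (hF : MemF L p F) {f : ℕ → ℝ} (hf : Summable fun d => F.p d * f d)
    {c : ℝ} (hc : ∀ d, L + 1 ≤ d → f d ≤ c) :
    ∑' d, F.p d * f d ≤ ∑ d ∈ Finset.Icc 1 L, p d * f d + pGt L p * c := by
  rw [tsum_mul_eq_of_memF hF hf, ← tsum_tail_eq_pGt hF, ← tsum_mul_right]
  refine add_le_add le_rfl ?_
  refine ((summable_nat_add_iff (L + 1)).2 hf).tsum_le_tsum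
    (fun d => mul_le_mul_of_nonneg_left (hc _ (by omega)) (F.nonneg _)) ?_
  exact ((summable_nat_add_iff (L + 1)).2 F.psummable).mul_right c

lemma tsum_mul_of_isG (hG : IsG L p G) (f : ℕ → ℝ) :
    ∑' d, G.p d * f d = ∑ d ∈ Finset.Icc 1 L, p d * f d + pGt L p * f (L + 1) := by
  rw [tsum_eq_sum (s := Finset.Icc 1 (L + 1)) fun d hd => ?_,
    Finset.sum_Icc_succ_top (by omega), hG.2.1]
  · rw [sum_head_eq_of_memF hG.1]
  · rcases Nat.eq_zero_or_pos d with rfl | hd0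
    · rw [G.zero, zero_mul]
    · rw [hG.2.2 d (by simp at hd; omega), zero_mul]

lemma tsum_mul_le_tsum_mul_of_isG (hG : IsG L p G) (hF : MemF L p F) {f : ℕ → ℝ}
    (hf : Summable fun d => F.p d * f d) (htail : ∀ d, L + 1 ≤ d → f d ≤ f (L + 1)) :
    ∑' d, F.p d * f d ≤ ∑' d, G.p d * f d :=
  (tsum_mul_le_of_memF hF hf htail).trans_eq (tsum_mul_of_isG hG f).symm

lemma pgf_le_pgf_of_isG (hG : IsG L p G) (hF : MemF L p F) {s : ℝ} (hs : s ∈ Icc (0 : ℝ) 1) :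
    pgf F s ≤ pgf G s :=
  tsum_mul_le_tsum_mul_of_isG hG hF (summable_pgf F hs) fun _ hd =>
    pow_le_pow_of_le_one hs.1 hs.2 hd

lemma pgfD_le_pgfD_of_isG (hG : IsG L p G) (hF : MemF L p F) {s : ℝ} (hs0 : 0 ≤ s)
    (hs : s ≤ Real.exp (-(2 / ((L : ℝ) + 1)))) : pgfD F s ≤ pgfD G s := by
  have hs1 : s ≤ 1 := hs.trans (Real.exp_le_one_iff.2 (neg_nonpos.2 (by positivity)))
  rw [pgfD_eq_tsum, pgfD_eq_tsum]
  refine tsum_mul_le_tsum_mul_of_isG hG hF ?_ fun d hd => ?_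
  · exact (summable_pgfD F ⟨hs0, hs1⟩).congr fun d => by ring
  · simpa using natCast_mul_pow_pred_le L hd hs0 hs

lemma pgf_of_isG (hG : IsG L p G) (s : ℝ) :
    pgf G s = ∑ d ∈ Finset.Icc 1 L, p d * s ^ d + pGt L p * s ^ (L + 1) :=
  tsum_mul_of_isG hG _

lemma kappa_mul_pGt (μ : ℝ) (h : pGt L p ≠ 0) :
    kappa L p μ * pGt L p = μ - ∑ d ∈ Finset.Icc 1 L, (d : ℝ) * p d :=
  div_mul_cancel₀ _ h

lemma mu_of_isG (hG : IsG L p G) :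
    mu G = ∑ d ∈ Finset.Icc 1 L, (d : ℝ) * p d + pGt L p * ((L : ℝ) + 1) := by
  rw [mu_eq_tsum, tsum_mul_of_isG hG]
  push_cast
  simp only [mul_comm]

lemma mu_lt_of_isG (hG : IsG L p G) {μ : ℝ} (hpGt : 0 < pGt L p)
    (hκ : (L : ℝ) + 1 < kappa L p μ) : mu G < μ := by
  have := kappa_mul_pGt μ hpGt.ne'
  rw [mu_of_isG hG]
  nlinarith

end FixedHead

section TwoPoint

variable {L : ℕ} {p : ℕ → ℝ} {μ : ℝ} {m : ℕ} {G Gm : DegreeDist}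

lemma rmass_nonneg {κ : ℝ} (hκ : (L : ℝ) + 1 ≤ κ) (hm : L + 1 < m) : 0 ≤ rmass L κ m := by
  have : ((L + 1 : ℕ) : ℝ) < m := by exact_mod_cast hm
  push_cast at this
  exact div_nonneg (by linarith) (by linarith)

lemma tendsto_rmass (L : ℕ) (κ : ℝ) : Tendsto (rmass L κ) atTop (𝓝 0) :=
  tendsto_const_nhds.div_atTop <| by
    simpa only [sub_eq_add_neg] using
      tendsto_atTop_add_const_right _ _ tendsto_natCast_atTop_atTop

lemma tsum_mul_of_isGm (hG : IsG L p G) (hGm : IsGm L p μ m Gm) (hm : L + 2 ≤ m)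
    (f : ℕ → ℝ) :
    ∑' d, Gm.p d * f d =
      ∑' d, G.p d * f d + rmass L (kappa L p μ) m * pGt L p * (f m - f (L + 1)) := by
  have hmG : m ∉ Finset.Icc 1 (L + 1) := by simp; omega
  rw [tsum_mul_of_isG hG, tsum_eq_sum (s := insert m (Finset.Icc 1 (L + 1))) fun d hd => ?_,
    Finset.sum_insert hmG, Finset.sum_Icc_succ_top (by omega), hGm.2.1, hGm.2.2.1,
    sum_head_eq_of_memF hGm.1]
  · ring
  · simp only [Finset.mem_insert, Finset.mem_Icc, not_or] at hd
    rcases Nat.eq_zero_or_pos d with rfl | hd0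
    · rw [Gm.zero, zero_mul]
    · rw [hGm.2.2.2 d (by omega) hd.1, zero_mul]

lemma pgf_of_isGm (hG : IsG L p G) (hGm : IsGm L p μ m Gm) (hm : L + 2 ≤ m) (s : ℝ) :
    pgf Gm s = pgf G s + rmass L (kappa L p μ) m * pGt L p * (s ^ m - s ^ (L + 1)) :=
  tsum_mul_of_isGm hG hGm hm _

lemma sub_le_pgfD_of_isGm (hG : IsG L p G) (hGm : IsGm L p μ m Gm) (hm : L + 2 ≤ m)
    (hpGt : 0 ≤ pGt L p) (hr : 0 ≤ rmass L (kappa L p μ) m) {s : ℝ} (hs : s ∈ Icc (0 : ℝ) 1) :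
    pgfD G s - rmass L (kappa L p μ) m * pGt L p * ((L : ℝ) + 1) ≤ pgfD Gm s := by
  rw [pgfD_eq_tsum, pgfD_eq_tsum, tsum_mul_of_isGm hG hGm hm, Nat.add_sub_cancel]
  have hL : -((L : ℝ) + 1) ≤ m * s ^ (m - 1) - ((L + 1 : ℕ) : ℝ) * s ^ L := by
    have : s ^ L ≤ 1 := pow_le_one₀ hs.1 hs.2
    have : 0 ≤ (m : ℝ) * s ^ (m - 1) := by have := hs.1; positivity
    push_cast
    nlinarith
  nlinarith [mul_le_mul_of_nonneg_left hL (mul_nonneg hr hpGt)]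

lemma mu_of_isGm (hG : IsG L p G) (hGm : IsGm L p μ m Gm) (hm : L + 2 ≤ m)
    (hpGt : pGt L p ≠ 0) : mu Gm = μ := by
  rw [mu_eq_tsum, tsum_mul_of_isGm hG hGm hm, ← mu_eq_tsum, mu_of_isG hG]
  have hm' : (m : ℝ) - ((L : ℝ) + 1) ≠ 0 := by
    have : ((L + 1 : ℕ) : ℝ) < m := by exact_mod_cast (by omega : L + 1 < m)
    push_cast at this
    linarith
  have hr : rmass L (kappa L p μ) m * ((m : ℝ) - ((L : ℝ) + 1)) = kappa L p μ - ((L : ℝ) + 1) :=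
    div_mul_cancel₀ _ hm'
  push_cast
  linear_combination pGt L p * hr + kappa_mul_pGt μ hpGt

end TwoPoint

lemma tendsto_of_pos_on_Ico {ι : Type*} {l : Filter ι} {φ : ℝ → ℝ} {a : ℝ}
    (hφ : ContinuousOn φ (Icc 0 a)) (hpos : ∀ s ∈ Ico 0 a, 0 < φ s) {z ε : ι → ℝ}
    (hε : Tendsto ε l (𝓝 0)) (hz : ∀ᶠ i in l, z i ∈ Icc 0 a ∧ φ (z i) ≤ ε i) :
    Tendsto z l (𝓝 a) := by
  refine tendsto_order.2 ⟨fun b hb => ?_, fun b hb => hz.mono fun i hi => hi.1.2.trans_lt hb⟩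
  rcases lt_or_ge b 0 with hb0 | hb0
  · exact hz.mono fun i hi => hb0.trans_le hi.1.1
  -- `φ` has a positive minimum `δ` on `[0, b]`, and eventually `φ (z i) ≤ ε i < δ`.
  obtain ⟨s₀, hs₀, hmin⟩ :=
    isCompact_Icc.exists_isMinOn (nonempty_Icc.2 hb0) (hφ.mono (Icc_subset_Icc_right hb.le))
  have hδ : 0 < φ s₀ := hpos s₀ ⟨hs₀.1, hs₀.2.trans_lt hb⟩
  filter_upwards [hz, hε.eventually (gt_mem_nhds hδ)] with i hi hεi
  by_contra! hle
  exact (hmin ⟨hi.1.1, hle⟩).not_gt (hi.2.trans_lt hεi)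

lemma csInf_eq_of_tendsto {α ι : Type*} [ConditionallyCompleteLinearOrder α] [TopologicalSpace α]
    [OrderTopology α] {l : Filter ι} [l.NeBot] {S : Set α} {a : α} {x : ι → α}
    (hlb : a ∈ lowerBounds S) (hx : Tendsto x l (𝓝 a)) (hmem : ∀ᶠ i in l, x i ∈ S) :
    sInf S = a :=
  have hcl := mem_closure_of_tendsto hx hmem
  (isGLB_of_mem_closure hlb hcl).csInf_eq (closure_nonempty_iff.1 ⟨a, hcl⟩)

lemma tendsto_pgf_Gm {L : ℕ} {p : ℕ → ℝ} {μ : ℝ} {G : DegreeDist} (hG : IsG L p G)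
    (hpGt : 0 < pGt L p) (hκ : (L : ℝ) + 1 < kappa L p μ) {z : ℝ} (hz : IsSmallestRoot G μ z)
    {Gm : ℕ → DegreeDist} {zm : ℕ → ℝ}
    (h : ∀ᶠ m in atTop, IsGm L p μ m (Gm m) ∧ IsSmallestRoot (Gm m) μ (zm m) ∧ zm m ≤ z) :
    Tendsto (fun m => pgf (Gm m) (zm m)) atTop (𝓝 (pgf G z)) := by
  have hr := tendsto_rmass L (kappa L p μ)
  have hev := h.and (eventually_ge_atTop (L + 2))
  have hzm : Tendsto zm atTop (𝓝 z) := by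
    refine tendsto_of_pos_on_Ico (φ := fun s => pgfD G s - μ * s)
      (((continuousOn_pgfD G).mono (Icc_subset_Icc_right hz.1.2)).sub (by fun_prop))
      (fun s hs => hz.sub_pos_of_lt hs.1 hs.2)
      (by simpa using (hr.mul_const (pGt L p)).mul_const ((L : ℝ) + 1)) ?_
    filter_upwards [hev] with m ⟨⟨hGm, hzm, hle⟩, hm⟩
    refine ⟨⟨hzm.1.1, hle⟩, ?_⟩
    have := sub_le_pgfD_of_isGm hG hGm hm hpGt.le (rmass_nonneg hκ.le (by omega)) hzm.1
    rw [← hzm.2.1] at this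
    linarith
  have hpgfG : Tendsto (fun m => pgf G (zm m)) atTop (𝓝 (pgf G z)) := by
    simp only [pgf_of_isG hG]
    exact ((by fun_prop : Continuous fun s : ℝ =>
      ∑ d ∈ Finset.Icc 1 L, p d * s ^ d + pGt L p * s ^ (L + 1)).tendsto z).comp hzm
  have herr : Tendsto (fun m => rmass L (kappa L p μ) m * pGt L p * (zm m ^ m - zm m ^ (L + 1)))
      atTop (𝓝 0) := by
    refine squeeze_zero_norm' ?_ (by simpa using hr.mul_const (pGt L p))
    filter_upwards [hev] with m ⟨⟨_, hzm, _⟩, hm⟩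
    have h0 := hzm.1.1
    have h1 := hzm.1.2
    rw [norm_mul, Real.norm_of_nonneg (mul_nonneg (rmass_nonneg hκ.le (by omega)) hpGt.le)]
    refine mul_le_of_le_one_right (mul_nonneg (rmass_nonneg hκ.le (by omega)) hpGt.le) ?_
    exact abs_sub_le_of_nonneg_of_le (pow_nonneg h0 _) (pow_le_one₀ h0 h1) (pow_nonneg h0 _)
      (pow_le_one₀ h0 h1)
  simpa using (hpgfG.add herr).congr' (hev.mono fun m hm => (pgf_of_isGm hG hm.1.1 hm.2 _).symm)

theorem tail_does_not_determine_giant_stmt6_general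
    (L : ℕ) (p : ℕ → ℝ)
    (hplt : ∑ i ∈ Finset.Icc 1 L, p i < 1)
    (μ : ℝ) (hκ : (L : ℝ) + 1 < kappa L p μ)
    (G : DegreeDist) (hG : IsG L p G)
    (zG : ℝ) (hzG : IsSmallestRoot G (mu G) zG)
    (hcond : zG ≤ Real.exp (-(2 / ((L : ℝ) + 1))))
    (zGmu : ℝ) (hzGmu : IsSmallestRoot G μ zGmu)
    (Gm : ℕ → DegreeDist)
    (hGm : ∀ m : ℕ, kappa L p μ < (m : ℝ) → IsGm L p μ m (Gm m))
    (zm : ℕ → ℝ)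
    (hzm : ∀ m : ℕ, kappa L p μ < (m : ℝ) → IsSmallestRoot (Gm m) μ (zm m)) :
    Filter.Tendsto (fun m => pgf (Gm m) (zm m)) Filter.atTop (nhds (pgf G zGmu)) ∧
    sInf {x : ℝ | ∃ F : DegreeDist, MemF L p F ∧ mu F = μ ∧
        ∃ zF, IsSmallestRoot F (mu F) zF ∧ x = 1 - pgf F zF} =
      1 - pgf G zGmu := by
  have hpGt : 0 < pGt L p := sub_pos.2 hplt
  -- `g_G'(z̃_G) = μ_G z̃_G ≤ μ z̃_G`, so `z̃_G^{(μ)} ≤ z̃_G`.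
  have hzGmu_le : zGmu ≤ Real.exp (-(2 / ((L : ℝ) + 1))) :=
    (hzGmu.le_of_pgfD_le_s6 hzG.1 (hzG.2.1.symm.trans_le
      (mul_le_mul_of_nonneg_right (mu_lt_of_isG hG hpGt hκ).le hzG.1.1))).trans hcond
  have hroot_le : ∀ F zF, MemF L p F → IsSmallestRoot F μ zF → zF ≤ zGmu := fun F _ hF hzF =>
    hzF.le_of_pgfD_le_s6 hzGmu.1
      ((pgfD_le_pgfD_of_isG hG hF hzGmu.1.1 hzGmu_le).trans_eq hzGmu.2.1.symm)
  have hGm' : ∀ᶠ m in atTop, IsGm L p μ m (Gm m) ∧ IsSmallestRoot (Gm m) μ (zm m) :=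
    (tendsto_natCast_atTop_atTop.eventually_gt_atTop _).mono fun m hm => ⟨hGm m hm, hzm m hm⟩
  have hconv := tendsto_pgf_Gm hG hpGt hκ hzGmu
    (hGm'.mono fun m h => ⟨h.1, h.2, hroot_le _ _ h.1.1 h.2⟩)
  refine ⟨hconv, csInf_eq_of_tendsto ?_ (tendsto_const_nhds.sub hconv) ?_⟩
  · rintro _ ⟨F, hF, hμF, zF, hzF, rfl⟩
    rw [hμF] at hzF
    linarith [(pgf_le_pgf_of_isG hG hF hzF.1).trans
      (pgf_mono G hzF.1.1 (hroot_le F zF hF hzF) hzGmu.1.2)]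
  · filter_upwards [hGm', eventually_ge_atTop (L + 2)] with m ⟨hGm, hzm⟩ hm
    have hμ := mu_of_isGm hG hGm hm hpGt.ne'
    exact ⟨Gm m, hGm.1, hμ, zm m, hμ ▸ hzm, rfl⟩

/-- If `κ > L+1` and `z̃_G ≤ e^{-2/(L+1)}`, then `g_{G_m}(z̃_m) → g_G(z̃_G^{(μ)})`
and the infimum of `ξ_F` over `F ∈ F(μ, p_L)` equals `1 - g_G(z̃_G^{(μ)})`. -/
theorem tail_does_not_determine_giant_stmt6
    (L : ℕ) (hL : 1 ≤ L) (p : ℕ → ℝ)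
    (hp : ∀ i, 0 ≤ p i) (hplt : ∑ i ∈ Finset.Icc 1 L, p i < 1)
    (μ : ℝ) (hμ : 0 < μ) (hκ : (L : ℝ) + 1 < kappa L p μ)
    (G : DegreeDist) (hG : IsG L p G)
    (zG : ℝ) (hzG : IsSmallestRoot G (mu G) zG)
    (hcond : zG ≤ Real.exp (-(2 / ((L : ℝ) + 1))))
    (zGmu : ℝ) (hzGmu : IsSmallestRoot G μ zGmu)
    (Gm : ℕ → DegreeDist)
    (hGm : ∀ m : ℕ, kappa L p μ < (m : ℝ) → IsGm L p μ m (Gm m))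
    (zm : ℕ → ℝ)
    (hzm : ∀ m : ℕ, kappa L p μ < (m : ℝ) → IsSmallestRoot (Gm m) μ (zm m)) :
    Filter.Tendsto (fun m => pgf (Gm m) (zm m)) Filter.atTop (nhds (pgf G zGmu)) ∧
    sInf {x : ℝ | ∃ F : DegreeDist, MemF L p F ∧ mu F = μ ∧
        ∃ zF, IsSmallestRoot F (mu F) zF ∧ x = 1 - pgf F zF} =
      1 - pgf G zGmu :=
  tail_does_not_determine_giant_stmt6_general L p hplt μ hκ G hG zG hzG hcond zGmu hzGmu Gm hGm zm
    hzm
end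

section
/- Let N be a random variable taking values in the nonnegative integers with finite mean κ, and suppose P(N ≤ ⌊κ⌋) > 0 and P(N > ⌊κ⌋) > 0. Then there exist probability distributions ν_1 and ν_2 on the nonnegative integers, each supported on the support of the law of N, with mean ⌊κ⌋ and ⌊κ⌋+1 respectively, such that the law of N equals the mixture (⌊κ⌋+1−κ)·ν_1 + (κ−⌊κ⌋)·ν_2. -/
open scoped BigOperators

/-! Split `ℕ` at `F = ⌊κ⌋` and condition `q` on the two halves: this writes `q` as a mixture of a
law `μ` of mean `m ≤ F` and a law `ν` of mean `n ≥ F + 1`. Mixing `μ` and `ν` in the proportions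
that produce the means `F` and `F + 1` gives `ν₁` and `ν₂`; since the mean of a mixture of `μ` and
`ν` is affine and injective in the weight, the `(F + 1 - κ, κ - F)`-combination of `ν₁` and `ν₂`
is the mixture of mean `κ`, which is `q`. -/

open Set Function

structure IsProbWithMean (ν : ℕ → ℝ) (m : ℝ) : Prop where
  nonneg : ∀ k, 0 ≤ ν k
  hasSum : HasSum ν 1
  hasSum_mean : HasSum (fun k : ℕ => (k : ℝ) * ν k) m

def mixture (t : ℝ) (μ ν : ℕ → ℝ) (k : ℕ) : ℝ := t * μ k + (1 - t) * ν k

noncomputable def condDist (q : ℕ → ℝ) (s : Set ℕ) (k : ℕ) : ℝ :=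
  s.indicator q k / ∑' j, s.indicator q j

theorem support_mixture_subset (t : ℝ) (μ ν : ℕ → ℝ) :
    support (mixture t μ ν) ⊆ support μ ∪ support ν := by
  intro k hk
  contrapose! hk
  simp_all [mixture]

theorem support_condDist_subset (q : ℕ → ℝ) (s : Set ℕ) :
    support (condDist q s) ⊆ s ∩ support q := by
  intro k hk
  by_cases hks : k ∈ s <;> simp_all [condDist]

namespace IsProbWithMean

variable {μ ν q : ℕ → ℝ} {m n c κ : ℝ}

theorem mix (hμ : IsProbWithMean μ m) (hν : IsProbWithMean ν n) {t : ℝ}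
    (ht : t ∈ Icc (0 : ℝ) 1) : IsProbWithMean (mixture t μ ν) (t * m + (1 - t) * n) where
  nonneg k :=
    add_nonneg (mul_nonneg ht.1 (hμ.nonneg k)) (mul_nonneg (sub_nonneg.2 ht.2) (hν.nonneg k))
  hasSum := by
    have := (hμ.hasSum.mul_left t).add (hν.hasSum.mul_left (1 - t))
    rwa [mul_one, mul_one, add_sub_cancel] at this
  hasSum_mean := by
    have h : (fun k : ℕ => (k : ℝ) * mixture t μ ν k) =
        fun k => t * (k * μ k) + (1 - t) * (k * ν k) := by
      ext k
      simp only [mixture]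
      ring
    rw [h]
    exact (hμ.hasSum_mean.mul_left t).add (hν.hasSum_mean.mul_left (1 - t))

theorem mean_le (hν : IsProbWithMean ν m) (h : ∀ k, ν k ≠ 0 → (k : ℝ) ≤ c) : m ≤ c := by
  have hsum : HasSum (fun k : ℕ => (c - k) * ν k) (c - m) := by
    simpa only [sub_mul, mul_one] using (hν.hasSum.mul_left c).sub hν.hasSum_mean
  refine sub_nonneg.1 (hsum.nonneg fun k => ?_)
  by_cases hk : ν k = 0
  · simp [hk]
  · exact mul_nonneg (sub_nonneg.2 (h k hk)) (hν.nonneg k)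

theorem le_mean (hν : IsProbWithMean ν m) (h : ∀ k, ν k ≠ 0 → c ≤ (k : ℝ)) : c ≤ m := by
  have hsum : HasSum (fun k : ℕ => (k - c) * ν k) (m - c) := by
    simpa only [sub_mul, mul_one] using hν.hasSum_mean.sub (hν.hasSum.mul_left c)
  refine sub_nonneg.1 (hsum.nonneg fun k => ?_)
  by_cases hk : ν k = 0
  · simp [hk]
  · exact mul_nonneg (sub_nonneg.2 (h k hk)) (hν.nonneg k)

theorem tsum_indicator_pos (hq : IsProbWithMean q κ) {s : Set ℕ} {k : ℕ} (hk : k ∈ s)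
    (hqk : 0 < q k) : 0 < ∑' j, s.indicator q j :=
  (hq.hasSum.summable.indicator s).tsum_pos (indicator_nonneg fun j _ => hq.nonneg j) k
    (by simpa [hk] using hqk)

theorem tsum_indicator_compl (hq : IsProbWithMean q κ) (s : Set ℕ) :
    ∑' j, sᶜ.indicator q j = 1 - ∑' j, s.indicator q j := by
  have := (hq.hasSum.summable.indicator s).hasSum.add (hq.hasSum.summable.indicator sᶜ).hasSum
  simp only [indicator_self_add_compl_apply] at this
  linarith [this.unique hq.hasSum]

theorem exists_condDist (hq : IsProbWithMean q κ) {s : Set ℕ} (hs : 0 < ∑' j, s.indicator q j) :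
    ∃ m, IsProbWithMean (condDist q s) m := by
  refine ⟨(∑' j, s.indicator (fun k : ℕ => (k : ℝ) * q k) j) / ∑' j, s.indicator q j,
    fun k => div_nonneg (indicator_nonneg (fun j _ => hq.nonneg j) k) hs.le, ?_, ?_⟩
  · have := (hq.hasSum.summable.indicator s).hasSum.div_const (∑' j, s.indicator q j)
    rwa [div_self hs.ne'] at this
  · have h : (fun k : ℕ => (k : ℝ) * condDist q s k) =
        fun k => s.indicator (fun k : ℕ => (k : ℝ) * q k) k / ∑' j, s.indicator q j := by
      ext k
      by_cases hk : k ∈ s <;> simp [condDist, hk, mul_div_assoc]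
    rw [h]
    exact (hq.hasSum_mean.summable.indicator s).hasSum.div_const _

theorem eq_mixture_condDist (hq : IsProbWithMean q κ) {s : Set ℕ}
    (hs : 0 < ∑' j, s.indicator q j) (hsc : 0 < ∑' j, sᶜ.indicator q j) :
    q = mixture (∑' j, s.indicator q j) (condDist q s) (condDist q sᶜ) := by
  ext k
  rw [hq.tsum_indicator_compl s] at hsc
  simp only [mixture, condDist, hq.tsum_indicator_compl s]
  field_simp
  exact (indicator_self_add_compl_apply s q k).symm

theorem exists_mixture_decomposition (hμ : IsProbWithMean μ m) (hν : IsProbWithMean ν n)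
    (hm : m ≤ c) (hn : c + 1 ≤ n) (α : ℝ) :
    ∃ s t, IsProbWithMean (mixture s μ ν) c ∧ IsProbWithMean (mixture t μ ν) (c + 1) ∧
      ∀ k, mixture α μ ν k = (c + 1 - (α * m + (1 - α) * n)) * mixture s μ ν k +
        (α * m + (1 - α) * n - c) * mixture t μ ν k := by
  have hmn : 0 < n - m := by linarith
  have hs : (n - c) / (n - m) ∈ Icc (0 : ℝ) 1 :=
    ⟨div_nonneg (by linarith) hmn.le, (div_le_one hmn).2 (by linarith)⟩
  have ht : (n - c - 1) / (n - m) ∈ Icc (0 : ℝ) 1 :=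
    ⟨div_nonneg (by linarith) hmn.le, (div_le_one hmn).2 (by linarith)⟩
  refine ⟨(n - c) / (n - m), (n - c - 1) / (n - m), ?_, ?_, fun k => ?_⟩
  · convert hμ.mix hν hs using 1
    field_simp
    ring
  · convert hμ.mix hν ht using 1
    field_simp
    ring
  · simp only [mixture]
    field_simp
    ring

end IsProbWithMean

/-- A distribution `q` on `ℕ` with mean `κ`, charging both `{≤ ⌊κ⌋}` and
`{> ⌊κ⌋}`, is a mixture `(⌊κ⌋+1-κ) ν₁ + (κ-⌊κ⌋) ν₂` of distributions supported on the
support of `q` with means `⌊κ⌋` and `⌊κ⌋+1`. -/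
theorem tail_does_not_determine_giant_stmt11
    (q : ℕ → ℝ) (hq : ∀ k, 0 ≤ q k) (hsum : ∑' k : ℕ, q k = 1)
    (hmean : Summable fun k : ℕ => (k : ℝ) * q k)
    (κ : ℝ) (hκ : κ = ∑' k : ℕ, (k : ℝ) * q k)
    (hlow : ∃ k : ℕ, k ≤ ⌊κ⌋₊ ∧ 0 < q k)
    (hhi : ∃ k : ℕ, ⌊κ⌋₊ < k ∧ 0 < q k) :
    ∃ ν₁ ν₂ : ℕ → ℝ,
      (∀ k, 0 ≤ ν₁ k) ∧ (∑' k : ℕ, ν₁ k) = 1 ∧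
      (∀ k, 0 ≤ ν₂ k) ∧ (∑' k : ℕ, ν₂ k) = 1 ∧
      (∀ k, ν₁ k ≠ 0 → q k ≠ 0) ∧ (∀ k, ν₂ k ≠ 0 → q k ≠ 0) ∧
      Summable (fun k : ℕ => (k : ℝ) * ν₁ k) ∧ (∑' k : ℕ, (k : ℝ) * ν₁ k) = (⌊κ⌋₊ : ℝ) ∧
      Summable (fun k : ℕ => (k : ℝ) * ν₂ k) ∧ (∑' k : ℕ, (k : ℝ) * ν₂ k) = (⌊κ⌋₊ : ℝ) + 1 ∧
      ∀ k, q k = ((⌊κ⌋₊ : ℝ) + 1 - κ) * ν₁ k + (κ - (⌊κ⌋₊ : ℝ)) * ν₂ k := by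
  have hsummable : Summable q := by
    by_contra h
    simp [tsum_eq_zero_of_not_summable h] at hsum
  have hqκ : IsProbWithMean q κ := ⟨hq, hsum ▸ hsummable.hasSum, hκ ▸ hmean.hasSum⟩
  obtain ⟨k₀, hk₀, hqk₀⟩ := hlow
  obtain ⟨k₁, hk₁, hqk₁⟩ := hhi
  set s := Iic ⌊κ⌋₊
  have hs := hqκ.tsum_indicator_pos (s := s) hk₀ hqk₀
  have hsc := hqκ.tsum_indicator_pos (s := sᶜ) (not_le.2 hk₁) hqk₁
  set α := ∑' j, s.indicator q j
  obtain ⟨m, hμ⟩ := hqκ.exists_condDist hs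
  obtain ⟨n, hν⟩ := hqκ.exists_condDist hsc
  have hm : m ≤ ⌊κ⌋₊ := hμ.mean_le fun k hk => by
    exact_mod_cast (support_condDist_subset q s hk).1
  have hn : (⌊κ⌋₊ : ℝ) + 1 ≤ n := hν.le_mean fun k hk => by
    exact_mod_cast Nat.succ_le_of_lt (not_le.1 (support_condDist_subset q sᶜ hk).1)
  have hqmix := hqκ.eq_mixture_condDist hs hsc
  have hα : α ∈ Icc (0 : ℝ) 1 :=
    ⟨hs.le, by linarith [hqκ.tsum_indicator_compl s]⟩
  have hκmix : κ = α * m + (1 - α) * n := by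
    have h := (hμ.mix hν hα).hasSum_mean
    rw [← hqmix] at h
    exact hqκ.hasSum_mean.unique h
  obtain ⟨t₁, t₂, hν₁, hν₂, hdecomp⟩ := hμ.exists_mixture_decomposition hν hm hn α
  have hsupp : ∀ t, support (mixture t (condDist q s) (condDist q sᶜ)) ⊆ support q := fun t =>
    (support_mixture_subset _ _ _).trans <| union_subset
      ((support_condDist_subset q s).trans inter_subset_right)
      ((support_condDist_subset q sᶜ).trans inter_subset_right)
  refine ⟨_, _, hν₁.nonneg, hν₁.hasSum.tsum_eq, hν₂.nonneg, hν₂.hasSum.tsum_eq,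
    fun _ h => hsupp t₁ h, fun _ h => hsupp t₂ h, hν₁.hasSum_mean.summable, hν₁.hasSum_mean.tsum_eq, hν₂.hasSum_mean.summable,
    hν₂.hasSum_mean.tsum_eq, fun k => ?_⟩
  have h := hdecomp k
  rw [← hκmix] at h
  exact (congrFun hqmix k).trans h
end

section
/- Fix L ≥ 1, probabilities p_1,…,p_L and a mean μ > 0 with κ ≥ L+1, and let H = H(μ,p_L). Then for every F ∈ F(μ,p_L) and every s ∈ [0,1], g_F(s) ≥ g_H(s). -/
open scoped BigOperators

/-!
For `s ∈ [0,1]` the sequence `d ↦ s ^ d` is convex, so it lies above the line `ℓ` through its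
values at `k = ⌊κ⌋` and `k + 1`. As `F` and `H` have the same total mass and the same mean `μ`,
`g_F(s) - g_H(s) = ∑_d (F_d - H_d) (s ^ d - ℓ d)`. Every term is nonnegative: it vanishes for
`d ∈ {k, k + 1}`, and for every other `d` we have `H_d ≤ F_d` (equality for `d ≤ L`, `H_d = 0`
for `d > L`).
-/

open Finset

theorem secant_le_of_monotone_sub {f : ℕ → ℝ} (hf : Monotone fun n => f (n + 1) - f n)
    (k d : ℕ) : f k + (f (k + 1) - f k) * ((d : ℝ) - k) ≤ f d := by
  rcases le_total k d with hkd | hdk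
  · have h : (d - k) • (f (k + 1) - f k) ≤ ∑ i ∈ Ico k d, (f (i + 1) - f i) := by
      simpa using card_nsmul_le_sum (Ico k d) _ _ fun i hi => hf (mem_Ico.1 hi).1
    rw [sum_Ico_sub f hkd, nsmul_eq_mul, Nat.cast_sub hkd] at h
    linarith
  · have h : ∑ i ∈ Ico d k, (f (i + 1) - f i) ≤ (k - d) • (f (k + 1) - f k) := by
      simpa using sum_le_card_nsmul (Ico d k) _ _ fun i hi => hf (mem_Ico.1 hi).2.le
    rw [sum_Ico_sub f hdk, nsmul_eq_mul, Nat.cast_sub hdk] at h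
    linarith

theorem monotone_pow_succ_sub_pow {s : ℝ} (hs0 : 0 ≤ s) (hs1 : s ≤ 1) :
    Monotone fun n : ℕ => s ^ (n + 1) - s ^ n := by
  intro m n hmn
  have h : s ^ n ≤ s ^ m := pow_le_pow_of_le_one hs0 hs1 hmn
  simp only [pow_succ]
  nlinarith

namespace DegreeDist

theorem summable_mul_pow (F : DegreeDist) {s : ℝ} (hs0 : 0 ≤ s) (hs1 : s ≤ 1) :
    Summable fun d : ℕ => F.p d * s ^ d :=
  F.psummable.of_nonneg_of_le (fun d => mul_nonneg (F.nonneg d) (pow_nonneg hs0 d))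
    fun d => mul_le_of_le_one_right (F.nonneg d) (pow_le_one₀ hs0 hs1)

theorem hasSum_mul_affine (F : DegreeDist) (a b : ℝ) :
    HasSum (fun d : ℕ => F.p d * (a * d + b)) (a * mu F + b) := by
  have h := (F.mean_summable.hasSum.mul_left a).add (F.psummable.hasSum.mul_left b)
  rw [F.sum_one, mul_one] at h
  refine (funext fun d => ?_ : (fun d : ℕ => F.p d * (a * d + b)) = _) ▸ h
  ring

theorem pgf_le_pgf_of_mu_eq {F H : DegreeDist} (hmu : mu F = mu H) (k : ℕ)
    (hle : ∀ d, d ≠ k → d ≠ k + 1 → H.p d ≤ F.p d) {s : ℝ} (hs0 : 0 ≤ s) (hs1 : s ≤ 1) :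
    pgf H s ≤ pgf F s := by
  set a := s ^ (k + 1) - s ^ k
  set b := s ^ k - a * k
  have hsecant : ∀ d : ℕ, a * d + b ≤ s ^ d := fun d => by
    have := secant_le_of_monotone_sub (monotone_pow_succ_sub_pow hs0 hs1) k d
    linarith
  have hterm : ∀ d : ℕ, 0 ≤ (F.p d - H.p d) * (s ^ d - (a * d + b)) := fun d => by
    by_cases hk : d = k
    · simp [hk, b]
    by_cases hk1 : d = k + 1
    · have : s ^ d - (a * d + b) = 0 := by simp only [hk1, b, a]; push_cast; ring
      simp [this]
    exact mul_nonneg (sub_nonneg.2 (hle d hk hk1)) (sub_nonneg.2 (hsecant d))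
  have hdiff : HasSum (fun d : ℕ => (F.p d - H.p d) * (s ^ d - (a * d + b)))
      (pgf F s - pgf H s) := by
    have h := ((F.summable_mul_pow hs0 hs1).hasSum.sub (F.hasSum_mul_affine a b)).sub
      ((H.summable_mul_pow hs0 hs1).hasSum.sub (H.hasSum_mul_affine a b))
    rw [hmu, sub_sub_sub_cancel_right] at h
    refine (funext fun d => ?_ : (fun d : ℕ => (F.p d - H.p d) * (s ^ d - (a * d + b))) = _) ▸ h
    ring
  linarith [hdiff.nonneg hterm]

end DegreeDist

section
variable {L : ℕ} {p : ℕ → ℝ} {μ : ℝ} {H : DegreeDist}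

theorem IsH.mu_eq (hH : IsH L p μ H) (hq : pGt L p ≠ 0) (hκ : (L : ℝ) + 1 ≤ kappa L p μ) :
    mu H = μ := by
  obtain ⟨hlow, hfloor, hfloor_succ, htail⟩ := hH
  set k := ⌊kappa L p μ⌋₊
  have hLk : L < k := Nat.le_floor (by exact_mod_cast hκ)
  have hdisj : Disjoint (Icc 1 L) {k, k + 1} := by
    simp only [disjoint_left, mem_Icc, mem_insert, mem_singleton]
    omega
  have hsupp : ∀ d ∉ Icc 1 L ∪ {k, k + 1}, (d : ℝ) * H.p d = 0 := by
    intro d hd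
    simp only [mem_union, mem_Icc, mem_insert, mem_singleton, not_or] at hd
    rcases Nat.eq_zero_or_pos d with rfl | hd0
    · simp
    · rw [htail d (by omega) hd.2.1 hd.2.2, mul_zero]
  have hκq : kappa L p μ * pGt L p = μ - ∑ d ∈ Icc 1 L, (d : ℝ) * p d :=
    div_mul_cancel₀ _ hq
  rw [mu, tsum_eq_sum hsupp, sum_union hdisj, sum_pair (by omega), hfloor, hfloor_succ,
    sum_congr rfl fun d hd => by rw [hlow d (mem_Icc.1 hd).1 (mem_Icc.1 hd).2]]
  push_cast
  linear_combination hκq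

theorem IsH.p_le_of_memF (hH : IsH L p μ H) {F : DegreeDist} (hF : MemF L p F) (d : ℕ)
    (hk : d ≠ ⌊kappa L p μ⌋₊) (hk1 : d ≠ ⌊kappa L p μ⌋₊ + 1) : H.p d ≤ F.p d := by
  rcases Nat.eq_zero_or_pos d with rfl | hd0
  · rw [H.zero, F.zero]
  by_cases hdL : d ≤ L
  · rw [hH.1 d hd0 hdL, hF d hd0 hdL]
  · rw [hH.2.2.2 d (by omega) hk hk1]
    exact F.nonneg d

end

theorem tail_does_not_determine_giant_stmt12_general
    (L : ℕ) (p : ℕ → ℝ)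
    (hplt : ∑ i ∈ Finset.Icc 1 L, p i < 1)
    (μ : ℝ) (hκ : (L : ℝ) + 1 ≤ kappa L p μ)
    (H : DegreeDist) (hH : IsH L p μ H)
    (F : DegreeDist) (hF : MemF L p F) (hFmu : mu F = μ)
    (s : ℝ) (hs : s ∈ Set.Icc (0 : ℝ) 1) :
    pgf H s ≤ pgf F s := by
  have hq : pGt L p ≠ 0 := (sub_pos.2 hplt).ne'
  exact DegreeDist.pgf_le_pgf_of_mu_eq (hFmu.trans (hH.mu_eq hq hκ).symm) _
    (hH.p_le_of_memF hF) hs.1 hs.2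

/-- If `κ ≥ L+1`, then for every `F ∈ F(μ, p_L)` and every `s ∈ [0,1]`,
`g_F(s) ≥ g_H(s)`. -/
theorem tail_does_not_determine_giant_stmt12
    (L : ℕ) (hL : 1 ≤ L) (p : ℕ → ℝ)
    (hp : ∀ i, 0 ≤ p i) (hplt : ∑ i ∈ Finset.Icc 1 L, p i < 1)
    (μ : ℝ) (hμ : 0 < μ) (hκ : (L : ℝ) + 1 ≤ kappa L p μ)
    (H : DegreeDist) (hH : IsH L p μ H)
    (F : DegreeDist) (hF : MemF L p F) (hFmu : mu F = μ)
    (s : ℝ) (hs : s ∈ Set.Icc (0 : ℝ) 1) :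
    pgf H s ≤ pgf F s :=
  tail_does_not_determine_giant_stmt12_general L p hplt μ hκ H hH F hF hFmu s hs
end

section
/- Let L ≥ 1 be an integer, let z be a real with 0 < z ≤ e^{−2/(L+1)}, and let N be a random variable taking values in the integers ≥ L+1 with finite mean κ (so κ ≥ L+1). Then E[N·z^N] ≥ ⌊κ⌋·z^{⌊κ⌋}·(⌊κ⌋+1−κ) + (⌊κ⌋+1)·z^{⌊κ⌋+1}·(κ−⌊κ⌋). -/
/-!
With `f n = n z ^ n`, the left-hand side is the chord of `f` over `[⌊κ⌋, ⌊κ⌋ + 1]` evaluated at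
`κ`, i.e. the tangent line `f a + (κ - a) Δf a` at `a = ⌊κ⌋`. The second difference is
`Δ²f n = z ^ n (1 - z) (n - (n + 2) z)`, which is nonnegative for `n ≥ L + 1` because
`z ≤ e^{-2/(L+1)} ≤ (L + 1)/(L + 3)`. So `f` is discretely convex on the support of `N`, lies above
its tangent line there, and taking expectations (Jensen) gives the bound.
-/

open scoped BigOperators

open scoped fwdDiff

theorem Real.exp_neg_le_inv_one_add {x : ℝ} (hx : -1 < x) : Real.exp (-x) ≤ (1 + x)⁻¹ := by
  rw [Real.exp_neg]
  exact inv_anti₀ (by linarith) (by linarith [Real.add_one_le_exp x])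

theorem add_two_mul_le_of_le_exp_neg_two_div {t z : ℝ} (ht : 0 < t)
    (hz : z ≤ Real.exp (-(2 / t))) : (t + 2) * z ≤ t := by
  have h2t : 0 ≤ 2 / t := by positivity
  have h := hz.trans (Real.exp_neg_le_inv_one_add (by linarith : -1 < 2 / t))
  rw [show (1 + 2 / t)⁻¹ = t / (t + 2) by field_simp, le_div_iff₀ (by positivity)] at h
  linarith

section TangentLine

variable {f : ℕ → ℝ} {b : ℕ}

theorem add_sub_mul_fwdDiff_le_of_monotoneOn (hf : MonotoneOn (Δ_[1] f) (Set.Ici b))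
    {a d : ℕ} (ha : b ≤ a) (hd : b ≤ d) : f a + ((d : ℝ) - a) * Δ_[1] f a ≤ f d := by
  have hstep : ∀ k, f (k + 1) = f k + Δ_[1] f k := fun k => by simp [fwdDiff]
  rcases le_total a d with had | hda
  · induction d, had using Nat.le_induction with
    | base => simp
    | succ k hak ih =>
      have hmono : Δ_[1] f a ≤ Δ_[1] f k := hf ha (ha.trans hak) hak
      rw [hstep]
      push_cast
      linarith [ih (ha.trans hak)]
  · induction a, hda using Nat.le_induction with
    | base => simp
    | succ k hdk ih =>
      have hmono : Δ_[1] f k ≤ Δ_[1] f (k + 1) :=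
        hf (hd.trans hdk) (Set.mem_Ici.2 (hd.trans hdk).step) k.le_succ
      have hneg : (d : ℝ) - (k + 1) ≤ 0 := by
        have : (d : ℝ) ≤ k := by exact_mod_cast hdk
        linarith
      rw [hstep]
      push_cast
      nlinarith [ih (hd.trans hdk)]

theorem add_tsum_sub_mul_fwdDiff_le_tsum (hf : MonotoneOn (Δ_[1] f) (Set.Ici b))
    {q : ℕ → ℝ} (hq : ∀ d, 0 ≤ q d) (hqb : ∀ d < b, q d = 0) (hqs : Summable q)
    (hsum : ∑' d, q d = 1) (hmean : Summable fun d : ℕ => (d : ℝ) * q d)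
    (hfq : Summable fun d => f d * q d) {a : ℕ} (ha : b ≤ a) :
    f a + ((∑' d : ℕ, (d : ℝ) * q d) - a) * Δ_[1] f a ≤ ∑' d, f d * q d := by
  set c := f a - a * Δ_[1] f a
  have hline : ∑' d : ℕ, (c * q d + Δ_[1] f a * ((d : ℝ) * q d)) =
      f a + ((∑' d : ℕ, (d : ℝ) * q d) - a) * Δ_[1] f a := by
    rw [(hqs.mul_left c).tsum_add (hmean.mul_left _), tsum_mul_left, tsum_mul_left, hsum]
    ring
  rw [← hline]
  refine ((hqs.mul_left c).add (hmean.mul_left _)).tsum_le_tsum (fun d => ?_) hfq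
  rcases lt_or_ge d b with hdb | hbd
  · simp [hqb d hdb]
  · calc c * q d + Δ_[1] f a * ((d : ℝ) * q d)
          = (f a + ((d : ℝ) - a) * Δ_[1] f a) * q d := by ring
      _ ≤ f d * q d := mul_le_mul_of_nonneg_right
          (add_sub_mul_fwdDiff_le_of_monotoneOn hf ha hbd) (hq d)

end TangentLine

theorem fwdDiff_fwdDiff_natCast_mul_pow (z : ℝ) (n : ℕ) :
    Δ_[1] (Δ_[1] fun k : ℕ => (k : ℝ) * z ^ k) n = z ^ n * ((1 - z) * (n - (n + 2) * z)) := by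
  simp only [fwdDiff, pow_succ]
  push_cast
  ring

theorem monotoneOn_fwdDiff_natCast_mul_pow {z : ℝ} (hz : 0 ≤ z) {b : ℕ}
    (hzb : ((b : ℝ) + 2) * z ≤ b) :
    MonotoneOn (Δ_[1] fun k : ℕ => (k : ℝ) * z ^ k) (Set.Ici b) := by
  refine monotoneOn_nat_Ici_of_le_succ fun n hn => sub_nonneg.1 ?_
  have hbn : (b : ℝ) ≤ n := by exact_mod_cast hn
  have hz1 : z ≤ 1 := by nlinarith
  rw [← fwdDiff, fwdDiff_fwdDiff_natCast_mul_pow]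
  exact mul_nonneg (pow_nonneg hz n) (mul_nonneg (by linarith) (by nlinarith))

theorem natCast_le_tsum_natCast_mul {q : ℕ → ℝ} {b : ℕ} (hq : ∀ d, 0 ≤ q d)
    (hqb : ∀ d < b, q d = 0) (hqs : Summable q) (hsum : ∑' d, q d = 1)
    (hmean : Summable fun d : ℕ => (d : ℝ) * q d) :
    (b : ℝ) ≤ ∑' d : ℕ, (d : ℝ) * q d := by
  have hle : ∀ d : ℕ, (b : ℝ) * q d ≤ d * q d := fun d => by
    rcases lt_or_ge d b with hdb | hbd
    · simp [hqb d hdb]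
    · exact mul_le_mul_of_nonneg_right (by exact_mod_cast hbd) (hq d)
  simpa [tsum_mul_left, hsum] using (hqs.mul_left (b : ℝ)).tsum_le_tsum hle hmean

theorem tail_does_not_determine_giant_stmt16_general
    (L : ℕ) (z : ℝ) (hz0 : 0 < z)
    (hz1 : z ≤ Real.exp (-(2 / ((L : ℝ) + 1))))
    (q : ℕ → ℝ) (hq : ∀ d, 0 ≤ q d) (hq0 : ∀ d, d < L + 1 → q d = 0)
    (hsum : ∑' d : ℕ, q d = 1)
    (hmean : Summable fun d : ℕ => (d : ℝ) * q d)
    (κ : ℝ) (hκ : κ = ∑' d : ℕ, (d : ℝ) * q d) :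
    (⌊κ⌋₊ : ℝ) * z ^ ⌊κ⌋₊ * ((⌊κ⌋₊ : ℝ) + 1 - κ) +
        ((⌊κ⌋₊ : ℝ) + 1) * z ^ (⌊κ⌋₊ + 1) * (κ - (⌊κ⌋₊ : ℝ)) ≤
      ∑' d : ℕ, (d : ℝ) * z ^ d * q d := by
  have hzb : (((L + 1 : ℕ) : ℝ) + 2) * z ≤ (L + 1 : ℕ) :=
    add_two_mul_le_of_le_exp_neg_two_div (by positivity) (by push_cast; exact hz1)
  have hqs : Summable q := by
    by_contra h
    simp [tsum_eq_zero_of_not_summable h] at hsum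
  have hκL : ((L + 1 : ℕ) : ℝ) ≤ κ := hκ ▸ natCast_le_tsum_natCast_mul hq hq0 hqs hsum hmean
  have hfq : Summable fun d : ℕ => (d : ℝ) * z ^ d * q d := by
    have hz1' : z ≤ 1 := by push_cast at hzb; nlinarith
    refine hmean.of_nonneg_of_le (fun d => mul_nonneg (by positivity) (hq d)) fun d => ?_
    calc (d : ℝ) * z ^ d * q d ≤ d * 1 * q d := by
          gcongr
          · exact hq d
          · exact pow_le_one₀ hz0.le hz1'
      _ = d * q d := by ring
  calc _ = (⌊κ⌋₊ : ℝ) * z ^ ⌊κ⌋₊ + (κ - ⌊κ⌋₊) * Δ_[1] (fun k : ℕ => (k : ℝ) * z ^ k) ⌊κ⌋₊ := by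
        simp only [fwdDiff]
        push_cast
        ring
    _ ≤ _ := by
        have := add_tsum_sub_mul_fwdDiff_le_tsum (monotoneOn_fwdDiff_natCast_mul_pow hz0.le hzb)
          hq hq0 hqs hsum hmean hfq (Nat.le_floor hκL)
        rwa [← hκ] at this

/-- For `0 < z ≤ e^{-2/(L+1)}` and a random variable `N ≥ L+1` with law `q`
and finite mean `κ`, `E[N z^N] ≥ ⌊κ⌋ z^{⌊κ⌋} (⌊κ⌋+1-κ) + (⌊κ⌋+1) z^{⌊κ⌋+1} (κ-⌊κ⌋)`. -/
theorem tail_does_not_determine_giant_stmt16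
    (L : ℕ) (hL : 1 ≤ L) (z : ℝ) (hz0 : 0 < z)
    (hz1 : z ≤ Real.exp (-(2 / ((L : ℝ) + 1))))
    (q : ℕ → ℝ) (hq : ∀ d, 0 ≤ q d) (hq0 : ∀ d, d < L + 1 → q d = 0)
    (hsum : ∑' d : ℕ, q d = 1)
    (hmean : Summable fun d : ℕ => (d : ℝ) * q d)
    (κ : ℝ) (hκ : κ = ∑' d : ℕ, (d : ℝ) * q d) :
    (⌊κ⌋₊ : ℝ) * z ^ ⌊κ⌋₊ * ((⌊κ⌋₊ : ℝ) + 1 - κ) +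
        ((⌊κ⌋₊ : ℝ) + 1) * z ^ (⌊κ⌋₊ + 1) * (κ - (⌊κ⌋₊ : ℝ)) ≤
      ∑' d : ℕ, (d : ℝ) * z ^ d * q d :=
  tail_does_not_determine_giant_stmt16_general L z hz0 hz1 q hq hq0 hsum hmean κ hκ
end
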